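/- There exists a constant C depending only on the dimension d (one may take C = the Lebesgue measure of the unit ball of ℝ^d) such that: for every g ∈ L²(ℝ^d), every positive integer n, and every unit vector e ∈ ℝ^d, the function I_n(y) := ∫_{ℝ^d} (a(x) − a(y)) · g(x) · n^{d+1} · (D_e ζ)(n(y − x)) dx satisfies the uniform-in-n bound ‖I_n‖_{L²(ℝ^d)} ≤ C · K · M · ‖g‖_{L²(ℝ^d)}. -/

import Mathlib

open MeasureTheory Metric
open scoped ENNReal

/-! Outside `‖y - x‖ ≤ 1/n` the integrand vanishes, and inside it `|a x - a y| ≤ K/n` and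
`|D_e ζ| ≤ M`, so `|I_n(y)|` is dominated by the convolution of `|g|` with
`Φ_n = K M n^d 𝟙_{B(0,1/n)}`. Young's inequality `‖Φ ∗ f‖₂ ≤ ‖Φ‖₁ ‖f‖₂` and the scaling
`‖Φ_n‖₁ = K M |B(0,1)|` give a bound independent of `n`. -/

theorem eLpNorm_two_sq {α ε : Type*} [MeasurableSpace α] [ENorm ε] (μ : Measure α) (f : α → ε) :
    eLpNorm f 2 μ ^ 2 = ∫⁻ x, ‖f x‖ₑ ^ 2 ∂μ := by
  simpa using eLpNorm_nnreal_pow_eq_lintegral (f := f) (μ := μ) (p := 2) two_ne_zero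

theorem sq_lintegral_mul_le_lintegral_mul_lintegral_mul_sq {α : Type*} [MeasurableSpace α]
    {μ : Measure α} {w f : α → ℝ≥0∞} (hw : AEMeasurable w μ) (hf : AEMeasurable f μ) :
    (∫⁻ x, w x * f x ∂μ) ^ 2 ≤ (∫⁻ x, w x ∂μ) * ∫⁻ x, w x * f x ^ 2 ∂μ := by
  have hsqrt : ∀ a : ℝ≥0∞, a ^ (2⁻¹ : ℝ) * a ^ (2⁻¹ : ℝ) = a := fun a => by
    rw [← ENNReal.rpow_add_of_nonneg _ _ (by norm_num) (by norm_num)]; norm_num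
  have hwf : AEMeasurable (fun x => w x * f x ^ 2) μ := hw.mul (hf.pow_const 2)
  have holder := ENNReal.lintegral_mul_norm_pow_le hw hwf
    (p := 2⁻¹) (q := 2⁻¹) (by norm_num) (by norm_num) (by norm_num)
  have hintegrand : ∀ x, w x ^ (2⁻¹ : ℝ) * (w x * f x ^ 2) ^ (2⁻¹ : ℝ) = w x * f x := fun x => by
    rw [ENNReal.mul_rpow_of_nonneg _ _ (by norm_num), ← mul_assoc, hsqrt, ← ENNReal.rpow_natCast,
      ← ENNReal.rpow_mul]
    norm_num
  simp only [hintegrand] at holder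
  calc (∫⁻ x, w x * f x ∂μ) ^ 2
      ≤ ((∫⁻ x, w x ∂μ) ^ (2⁻¹ : ℝ) * (∫⁻ x, w x * f x ^ 2 ∂μ) ^ (2⁻¹ : ℝ)) ^ 2 := by gcongr
    _ = (∫⁻ x, w x ∂μ) * ∫⁻ x, w x * f x ^ 2 ∂μ := by rw [mul_pow, sq, sq, hsqrt, hsqrt]

/-- The Schur test for nonnegative kernels, in its `L²` form. -/
theorem lintegral_sq_lintegral_mul_le_of_kernel {α β : Type*} [MeasurableSpace α]
    [MeasurableSpace β] {μ : Measure α} {ν : Measure β} [SFinite μ] [SFinite ν] {k : α → β → ℝ≥0∞}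
    (hk : Measurable (Function.uncurry k)) {f : β → ℝ≥0∞} (hf : AEMeasurable f ν) {A B : ℝ≥0∞}
    (hA : ∀ y, ∫⁻ x, k y x ∂ν ≤ A) (hB : ∀ x, ∫⁻ y, k y x ∂μ ≤ B) :
    ∫⁻ y, (∫⁻ x, k y x * f x ∂ν) ^ 2 ∂μ ≤ A * B * ∫⁻ x, f x ^ 2 ∂ν := by
  have hprod : AEMeasurable (Function.uncurry fun y x => k y x * f x ^ 2) (μ.prod ν) :=
    hk.aemeasurable.mul ((hf.pow_const 2).comp_quasiMeasurePreserving
      Measure.quasiMeasurePreserving_snd)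
  calc ∫⁻ y, (∫⁻ x, k y x * f x ∂ν) ^ 2 ∂μ
      ≤ ∫⁻ y, A * ∫⁻ x, k y x * f x ^ 2 ∂ν ∂μ := lintegral_mono fun y =>
        (sq_lintegral_mul_le_lintegral_mul_lintegral_mul_sq hk.of_uncurry_left.aemeasurable
          hf).trans (by gcongr; exact hA y)
    _ = A * ∫⁻ x, (∫⁻ y, k y x ∂μ) * f x ^ 2 ∂ν := by
        have hinner : AEMeasurable (fun y => ∫⁻ x, k y x * f x ^ 2 ∂ν) μ :=
          hprod.lintegral_prod_right'
        rw [lintegral_const_mul'' _ hinner, lintegral_lintegral_swap hprod]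
        exact congrArg _ (lintegral_congr fun x => lintegral_mul_const _ hk.of_uncurry_right)
    _ ≤ A * B * ∫⁻ x, f x ^ 2 ∂ν := by
        rw [mul_assoc, ← lintegral_const_mul'' _ (hf.pow_const 2)]
        gcongr with x
        exact hB x

theorem eLpNorm_two_le_of_enorm_le_convolution {G E ε : Type*} [AddGroup G] [MeasurableSpace G]
    [MeasurableAdd G] [MeasurableSub₂ G] [MeasurableNeg G] {μ : Measure G} [SFinite μ]
    [μ.IsAddLeftInvariant] [μ.IsAddRightInvariant] [μ.IsNegInvariant] [NormedAddCommGroup E]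
    [ENorm ε] {Φ : G → ℝ≥0∞} (hΦ : Measurable Φ) {g : G → E} (hg : AEStronglyMeasurable g μ)
    {F : G → ε} (hF : ∀ y, ‖F y‖ₑ ≤ ∫⁻ x, Φ (y - x) * ‖g x‖ₑ ∂μ) :
    eLpNorm F 2 μ ≤ (∫⁻ x, Φ x ∂μ) * eLpNorm g 2 μ := by
  have hk : Measurable (Function.uncurry fun y x => Φ (y - x)) := hΦ.comp measurable_sub
  rw [← ENNReal.pow_le_pow_left_iff two_ne_zero, mul_pow, eLpNorm_two_sq, eLpNorm_two_sq,
    sq (∫⁻ x, Φ x ∂μ)]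
  calc ∫⁻ y, ‖F y‖ₑ ^ 2 ∂μ ≤ ∫⁻ y, (∫⁻ x, Φ (y - x) * ‖g x‖ₑ ∂μ) ^ 2 ∂μ := by
        gcongr with y; exact hF y
    _ ≤ _ := lintegral_sq_lintegral_mul_le_of_kernel hk hg.enorm
        (fun y => (lintegral_sub_left_eq_self Φ y).le)
        (fun x => (lintegral_sub_right_eq_self Φ x).le)

theorem lintegral_indicator_closedBall_inv_const_mul_pow {E : Type*} [NormedAddCommGroup E]
    [NormedSpace ℝ E] [MeasurableSpace E] [BorelSpace E] [FiniteDimensional ℝ E] (μ : Measure E) [μ.IsAddHaarMeasure]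
    {d : ℕ} (hd : Module.finrank ℝ E = d) {c t : ℝ} (hc : 0 ≤ c) (ht : 0 < t) :
    ∫⁻ x, (closedBall 0 t⁻¹).indicator (fun _ => ENNReal.ofReal (c * t ^ d)) x ∂μ =
      ENNReal.ofReal c * μ (closedBall 0 1) := by
  rw [lintegral_indicator_const measurableSet_closedBall,
    Measure.addHaar_closedBall' μ 0 (by positivity), hd,
    ← mul_assoc, ← ENNReal.ofReal_mul (by positivity), mul_assoc, ← mul_pow,
    mul_inv_cancel₀ ht.ne', one_pow, mul_one]

theorem enorm_commutator_kernel_le {E : Type*} [NormedAddCommGroup E] [NormedSpace ℝ E]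
    {ζ a : E → ℝ} {M K t : ℝ} (d : ℕ) (hsupp : Function.support ζ ⊆ closedBall 0 1)
    (hDζ : ∀ x, ‖fderiv ℝ ζ x‖ ≤ M) (hK : 0 ≤ K) (ha : ∀ x y, |a x - a y| ≤ K * ‖x - y‖)
    (ht : 0 < t) {e : E} (he : ‖e‖ ≤ 1) (g : E → ℝ) (x y : E) :
    ‖(a x - a y) * g x * t ^ (d + 1) * fderiv ℝ ζ (t • (y - x)) e‖ₑ ≤
      (closedBall 0 t⁻¹).indicator (fun _ => ENNReal.ofReal (K * M * t ^ d)) (y - x) * ‖g x‖ₑ := by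
  by_cases hxy : y - x ∈ closedBall 0 t⁻¹
  · have hM : 0 ≤ M := (norm_nonneg _).trans (hDζ 0)
    have hlip : |a x - a y| ≤ K * t⁻¹ := by
      rw [mem_closedBall_zero_iff, norm_sub_rev] at hxy
      exact (ha x y).trans (by gcongr)
    have hder : ‖fderiv ℝ ζ (t • (y - x)) e‖ ≤ M :=
      ((fderiv ℝ ζ _).le_opNorm e).trans
        ((mul_le_of_le_one_right (norm_nonneg _) he).trans (hDζ _))
    rw [Set.indicator_of_mem hxy, ← ofReal_norm, ← ofReal_norm,
      ← ENNReal.ofReal_mul (by positivity)]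
    refine ENNReal.ofReal_le_ofReal ?_
    calc ‖(a x - a y) * g x * t ^ (d + 1) * fderiv ℝ ζ (t • (y - x)) e‖
        = |a x - a y| * ‖g x‖ * t ^ (d + 1) * ‖fderiv ℝ ζ (t • (y - x)) e‖ := by
          simp only [norm_mul, norm_pow, Real.norm_eq_abs, abs_of_pos ht]
      _ ≤ K * t⁻¹ * ‖g x‖ * t ^ (d + 1) * M := by gcongr
      _ = K * M * t ^ d * ‖g x‖ := by field_simp; ring
  · have hout : t • (y - x) ∉ tsupport ζ := fun h => by
      have h1 := closure_minimal hsupp isClosed_closedBall h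
      rw [mem_closedBall_zero_iff, norm_smul, Real.norm_eq_abs, abs_of_pos ht] at h1
      rw [mem_closedBall_zero_iff, not_le] at hxy
      have := (inv_lt_iff_one_lt_mul₀' ht).mp hxy
      linarith
    rw [fderiv_of_notMem_tsupport ℝ hout, zero_apply, mul_zero, enorm_zero]
    exact zero_le

theorem stmt_11 (d : ℕ) (M K : ℝ) (hK : 0 < K)
    (ζ : EuclideanSpace ℝ (Fin d) → ℝ)
    (hsupp : Function.support ζ ⊆ closedBall 0 1)
    (hDζ : ∀ x, ‖fderiv ℝ ζ x‖ ≤ M)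
    (a : EuclideanSpace ℝ (Fin d) → ℝ)
    (ha : ∀ x y, |a x - a y| ≤ K * ‖x - y‖) :
    ∃ C > (0 : ℝ),
      C = (volume (closedBall (0 : EuclideanSpace ℝ (Fin d)) 1)).toReal ∧
      ∀ g : EuclideanSpace ℝ (Fin d) → ℝ, MemLp g 2 volume →
        ∀ n : ℕ, 0 < n → ∀ e : EuclideanSpace ℝ (Fin d), ‖e‖ = 1 →
          eLpNorm
            (fun y => ∫ x, (a x - a y) * g x * (n : ℝ) ^ (d + 1) *
              fderiv ℝ ζ ((n : ℝ) • (y - x)) e) 2 volume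
            ≤ ENNReal.ofReal (C * K * M) * eLpNorm g 2 volume := by
  have hV : volume (closedBall (0 : EuclideanSpace ℝ (Fin d)) 1) ≠ ∞ :=
    measure_closedBall_lt_top.ne
  refine ⟨_, ENNReal.toReal_pos (measure_closedBall_pos volume 0 one_pos).ne' hV, rfl, ?_⟩
  intro g hg n hn e he
  have hn' : (0 : ℝ) < n := Nat.cast_pos.mpr hn
  have hM : 0 ≤ M := (norm_nonneg _).trans (hDζ 0)
  calc _ ≤ (∫⁻ x, (closedBall 0 (n : ℝ)⁻¹).indicator
          (fun _ => ENNReal.ofReal (K * M * (n : ℝ) ^ d)) x) * eLpNorm g 2 volume :=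
        eLpNorm_two_le_of_enorm_le_convolution (measurable_const.indicator measurableSet_closedBall)
          hg.1 fun y => (enorm_integral_le_lintegral_enorm _).trans <| lintegral_mono fun x =>
            enorm_commutator_kernel_le d hsupp hDζ hK.le ha hn' he.le g x y
    _ = _ := by
        rw [lintegral_indicator_closedBall_inv_const_mul_pow volume finrank_euclideanSpace_fin
          (by positivity) hn', mul_assoc (ENNReal.toReal _) K,
          ENNReal.ofReal_mul ENNReal.toReal_nonneg, ENNReal.ofReal_toReal hV, mul_comm (volume _)]
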